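/- Let K be a field of characteristic zero, a ≥ b ≥ 1, and let A_{a,b} = K[x,y]/(x^{a+1}, y^{b+1}, xy), with X, Y the images of x, y and maximal ideal m = (X, Y). Then every nonzero element f ∈ m is associated to an element of the form αX^k + βY^s: there exist scalars α, β ∈ K not both zero, integers 1 ≤ k ≤ a and 1 ≤ s ≤ b, and a unit c ∈ A_{a,b}^× such that f = (αX^k + βY^s)·c. -/

import Mathlib

open MvPolynomial

/-- The algebra `A_{a,b} = K[x,y]/(x^{a+1}, y^{b+1}, xy)`. -/
abbrev Aab (K : Type*) [Field K] (a b : ℕ) : Type _ :=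
  MvPolynomial (Fin 2) K ⧸
    Ideal.span {(X 0 : MvPolynomial (Fin 2) K) ^ (a + 1),
      (X 1 : MvPolynomial (Fin 2) K) ^ (b + 1),
      (X 0 : MvPolynomial (Fin 2) K) * X 1}

/-- The image of `x` in `A_{a,b}`. -/
noncomputable def AabX (K : Type*) [Field K] (a b : ℕ) : Aab K a b :=
  Ideal.Quotient.mk _ (X 0 : MvPolynomial (Fin 2) K)

/-- The image of `y` in `A_{a,b}`. -/
noncomputable def AabY (K : Type*) [Field K] (a b : ℕ) : Aab K a b :=
  Ideal.Quotient.mk _ (X 1 : MvPolynomial (Fin 2) K)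

/-!
Since `XY = 0`, every element of `m` splits as `g(X) + h(Y)` with `g, h ∈ K[T]` vanishing at `0`.
Factoring out the lowest-order term, `g(X) = α X^k (1 + X u)` and `h(Y) = β Y^s (1 + Y v)`,
where `k ≤ a` and `s ≤ b` may be assumed because higher powers vanish. Again by `XY = 0`,
`g(X) + h(Y) = (α X^k + β Y^s)(1 + X u)(1 + Y v)`, and both factors on the right are units
because `X` and `Y` are nilpotent.
-/

open Polynomial

theorem Polynomial.exists_eq_X_pow_mul_coeff_zero_ne_zero {R : Type*} [CommRing R] {P : R[X]}
    (hP : P ≠ 0) : ∃ (m : ℕ) (q : R[X]), P = X ^ m * q ∧ q.coeff 0 ≠ 0 := by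
  obtain ⟨q, hPq, hq⟩ := exists_eq_pow_rootMultiplicity_mul_and_not_dvd P hP 0
  rw [map_zero, sub_zero] at hPq hq
  exact ⟨_, q, hPq, mt X_dvd_iff.mpr hq⟩

section AdjoinPair

variable {R A : Type*} [CommSemiring R] [CommSemiring A] [Algebra R A]

theorem exists_mul_eq_aeval_mul_of_mem_adjoin_pair {x y u : A} (hxy : x * y = 0)
    (hu : u ∈ Algebra.adjoin R {x, y}) : ∃ P : R[X], u * x = aeval x P * x := by
  induction hu using Algebra.adjoin_induction with
  | mem z hz =>
    rcases hz with rfl | rfl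
    · exact ⟨X, by rw [Polynomial.aeval_X]⟩
    · exact ⟨0, by rw [mul_comm, hxy, map_zero, zero_mul]⟩
  | algebraMap r => exact ⟨C r, by rw [Polynomial.aeval_C]⟩
  | add u v _ _ hu hv =>
    obtain ⟨P, hP⟩ := hu
    obtain ⟨Q, hQ⟩ := hv
    exact ⟨P + Q, by rw [add_mul, hP, hQ, map_add, add_mul]⟩
  | mul u v _ _ hu hv =>
    obtain ⟨P, hP⟩ := hu
    obtain ⟨Q, hQ⟩ := hv
    exact ⟨P * Q, by rw [mul_assoc, hQ, mul_left_comm, hP, map_mul]; ring⟩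

theorem exists_eq_aeval_mul_add_aeval_mul_of_mem_span_pair {x y f : A} (hxy : x * y = 0)
    (hgen : Algebra.adjoin R {x, y} = ⊤) (hf : f ∈ Ideal.span {x, y}) :
    ∃ P Q : R[X], f = aeval x P * x + aeval y Q * y := by
  obtain ⟨u, v, rfl⟩ := Ideal.mem_span_pair.mp hf
  have hu : u ∈ Algebra.adjoin R {x, y} := hgen ▸ Algebra.mem_top
  have hv : v ∈ Algebra.adjoin R {y, x} := Set.pair_comm x y ▸ hgen ▸ Algebra.mem_top
  obtain ⟨P, hP⟩ := exists_mul_eq_aeval_mul_of_mem_adjoin_pair hxy hu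
  obtain ⟨Q, hQ⟩ :=
    exists_mul_eq_aeval_mul_of_mem_adjoin_pair (mul_comm x y ▸ hxy) hv
  exact ⟨P, Q, by rw [hP, hQ]⟩

end AdjoinPair

section LowestOrderTerm

variable {K A : Type*} [Field K] [CommRing A] [Algebra K A]

theorem exists_aeval_mul_eq_smul_pow_mul_one_add (P : K[X]) (t : A) :
    ∃ (α : K) (k : ℕ) (w : A), aeval t P * t = α • t ^ (k + 1) * (1 + t * w) := by
  rcases eq_or_ne P 0 with rfl | hP
  · exact ⟨0, 0, 0, by simp⟩
  obtain ⟨m, q, rfl, hq⟩ := P.exists_eq_X_pow_mul_coeff_zero_ne_zero hP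
  refine ⟨q.coeff 0, m, (q.coeff 0)⁻¹ • aeval t q.divX, ?_⟩
  have hα : algebraMap K A (q.coeff 0) * algebraMap K A (q.coeff 0)⁻¹ = 1 := by
    rw [← map_mul, mul_inv_cancel₀ hq, map_one]
  conv_lhs => rw [← X_mul_divX_add q]
  simp only [map_mul, map_add, map_pow, Polynomial.aeval_X, Polynomial.aeval_C,
    Algebra.smul_def]
  linear_combination (-(t ^ (m + 2) * aeval t q.divX)) * hα

theorem exists_aeval_mul_eq_smul_pow_mul_one_add_of_pow_eq_zero (P : K[X]) {t : A}
    {n : ℕ} (hn : 1 ≤ n) (ht : t ^ (n + 1) = 0) :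
    ∃ (α : K) (k : ℕ) (w : A), 1 ≤ k ∧ k ≤ n ∧ aeval t P * t = α • t ^ k * (1 + t * w) := by
  obtain ⟨α, k, w, h⟩ := exists_aeval_mul_eq_smul_pow_mul_one_add P t
  by_cases hk : k + 1 ≤ n
  · exact ⟨α, k + 1, w, by omega, hk, h⟩
  · refine ⟨0, 1, w, le_rfl, hn, ?_⟩
    rw [h, pow_eq_zero_of_le (by omega) ht]
    simp

theorem exists_eq_smul_pow_add_smul_pow_mul_unit {x y f : A} {a b : ℕ} (ha : 1 ≤ a)
    (hb : 1 ≤ b) (hxa : x ^ (a + 1) = 0) (hyb : y ^ (b + 1) = 0) (hxy : x * y = 0)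
    (hgen : Algebra.adjoin K {x, y} = ⊤) (hf0 : f ≠ 0) (hf : f ∈ Ideal.span {x, y}) :
    ∃ α β : K, (α ≠ 0 ∨ β ≠ 0) ∧ ∃ k s : ℕ, 1 ≤ k ∧ k ≤ a ∧ 1 ≤ s ∧ s ≤ b ∧
      ∃ c : Aˣ, f = (α • x ^ k + β • y ^ s) * c := by
  obtain ⟨P, Q, rfl⟩ := exists_eq_aeval_mul_add_aeval_mul_of_mem_span_pair hxy hgen hf
  obtain ⟨α, k, w, hk, hka, hP⟩ :=
    exists_aeval_mul_eq_smul_pow_mul_one_add_of_pow_eq_zero P ha hxa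
  obtain ⟨β, s, z, hs, hsb, hQ⟩ :=
    exists_aeval_mul_eq_smul_pow_mul_one_add_of_pow_eq_zero Q hb hyb
  have hunit : IsUnit ((1 + x * w) * (1 + y * z)) :=
    (Commute.all x w |>.isNilpotent_mul_right ⟨_, hxa⟩).isUnit_one_add.mul
      (Commute.all y z |>.isNilpotent_mul_right ⟨_, hyb⟩).isUnit_one_add
  refine ⟨α, β, ?_, k, s, hk, hka, hs, hsb, hunit.unit, ?_⟩
  · contrapose! hf0
    rw [hP, hQ, hf0.1, hf0.2, zero_smul, zero_smul, zero_mul, zero_mul, add_zero]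
  · have hxky : x ^ k * y = 0 := pow_mul_eq_zero_of_le hk (by rwa [pow_one])
    have hysx : y ^ s * x = 0 := pow_mul_eq_zero_of_le hs (by rwa [pow_one, mul_comm])
    rw [hunit.unit_spec, hP, hQ]
    simp only [Algebra.smul_def]
    linear_combination (-(algebraMap K A α * (1 + x * w) * z)) * hxky
      - (algebraMap K A β * (1 + y * z) * w) * hysx

end LowestOrderTerm

namespace Aab

variable (K : Type*) [Field K] (a b : ℕ)

theorem adjoin_X_Y : Algebra.adjoin K {AabX K a b, AabY K a b} = ⊤ := by
  rw [eq_top_iff]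
  rintro u -
  obtain ⟨F, rfl⟩ := Ideal.Quotient.mk_surjective u
  induction F using MvPolynomial.induction_on with
  | C r => exact Subalgebra.algebraMap_mem _ r
  | add F G hF hG => rw [map_add]; exact add_mem hF hG
  | mul_X F i hF =>
    rw [map_mul]
    refine mul_mem hF (Algebra.subset_adjoin ?_)
    fin_cases i
    · exact Or.inl rfl
    · exact Or.inr rfl

theorem X_pow_eq_zero : AabX K a b ^ (a + 1) = 0 :=
  Ideal.Quotient.eq_zero_iff_mem.mpr (Ideal.subset_span (by simp))

theorem Y_pow_eq_zero : AabY K a b ^ (b + 1) = 0 :=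
  Ideal.Quotient.eq_zero_iff_mem.mpr (Ideal.subset_span (by simp))

theorem X_mul_Y : AabX K a b * AabY K a b = 0 :=
  Ideal.Quotient.eq_zero_iff_mem.mpr (Ideal.subset_span (by simp))

end Aab

theorem stmt14_general (K : Type*) [Field K] (a b : ℕ) (hb : 1 ≤ b) (hab : b ≤ a)
    (f : Aab K a b) (hf0 : f ≠ 0)
    (hfm : f ∈ Ideal.span {AabX K a b, AabY K a b}) :
    ∃ α β : K, (α ≠ 0 ∨ β ≠ 0) ∧ ∃ k s : ℕ, 1 ≤ k ∧ k ≤ a ∧ 1 ≤ s ∧ s ≤ b ∧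
      ∃ c : (Aab K a b)ˣ, f = (α • AabX K a b ^ k + β • AabY K a b ^ s) * c :=
  exists_eq_smul_pow_add_smul_pow_mul_unit (hb.trans hab) hb (Aab.X_pow_eq_zero K a b)
    (Aab.Y_pow_eq_zero K a b) (Aab.X_mul_Y K a b) (Aab.adjoin_X_Y K a b) hf0 hfm

/-- in `A_{a,b}` with `a ≥ b ≥ 1`, every nonzero element `f` of the maximal
ideal `m = (X, Y)` is associated to an element `α X^k + β Y^s` with `α, β` not both zero,
`1 ≤ k ≤ a` and `1 ≤ s ≤ b`. -/
theorem stmt14 (K : Type*) [Field K] [CharZero K] (a b : ℕ) (hb : 1 ≤ b) (hab : b ≤ a)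
    (f : Aab K a b) (hf0 : f ≠ 0)
    (hfm : f ∈ Ideal.span {AabX K a b, AabY K a b}) :
    ∃ α β : K, (α ≠ 0 ∨ β ≠ 0) ∧ ∃ k s : ℕ, 1 ≤ k ∧ k ≤ a ∧ 1 ≤ s ∧ s ≤ b ∧
      ∃ c : (Aab K a b)ˣ, f = (α • AabX K a b ^ k + β • AabY K a b ^ s) * c :=
  stmt14_general K a b hb hab f hf0 hfm
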